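/- Weak typicality (AEP): let p be a probability distribution on a finite set 𝒳 with Shannon entropy H(p) = −Σ_x p(x) log₂ p(x). For every ε > 0 and δ > 0 there exists N such that for every n ≥ N, if X₁, …, X_n are drawn independently and identically from p, then the probability that |−(1/n) Σ_{i=1}^n log₂ p(X_i) − H(p)| ≤ δ is at least 1 − ε. -/
import Mathlib


noncomputable section
open Classical

/-- The Shannon entropy `H(p) = −Σ_x p(x) log₂ p(x)` (with `0·log₂ 0 = 0`,
which holds automatically for `Real.logb`). -/
def shannonEntropy {𝒳 : Type*} [Fintype 𝒳] (p : 𝒳 → ℝ) : ℝ :=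
  -∑ x, p x * Real.logb 2 (p x)

/-- A sequence is `δ`-typical if all its letters have positive probability and its
sample entropy is within `δ` of the true entropy. -/
def IsTypical {𝒳 : Type*} [Fintype 𝒳] (p : 𝒳 → ℝ) (δ : ℝ) {n : ℕ}
    (xs : Fin n → 𝒳) : Prop :=
  (∀ i, 0 < p (xs i)) ∧
    |(-(1 / (n : ℝ)) * ∑ i, Real.logb 2 (p (xs i))) - shannonEntropy p| ≤ δ


lemma sum_prod_pi {𝒳 : Type*} [Fintype 𝒳] {n : ℕ} (q : Fin n → 𝒳 → ℝ) :
    ∑ xs : Fin n → 𝒳, ∏ k, q k (xs k) = ∏ k, ∑ x, q k x := by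
  rw [Finset.prod_univ_sum, Fintype.piFinset_univ]

section aux
variable {𝒳 : Type*} [Fintype 𝒳] {n : ℕ}

lemma sum_W (p : 𝒳 → ℝ) (hp1 : ∑ x, p x = 1) :
    ∑ xs : Fin n → 𝒳, ∏ k, p (xs k) = 1 := by
  rw [sum_prod_pi (fun _ x => p x)]
  simp [hp1]

lemma E_one (p : 𝒳 → ℝ) (hp1 : ∑ x, p x = 1) (i : Fin n) (G : 𝒳 → ℝ) :
    ∑ xs : Fin n → 𝒳, (∏ k, p (xs k)) * G (xs i) = ∑ x, p x * G x := by
  have key : ∀ xs : Fin n → 𝒳,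
      (∏ k, p (xs k)) * G (xs i) = ∏ k, (if k = i then p (xs k) * G (xs k) else p (xs k)) := by
    intro xs
    rw [← Finset.mul_prod_erase Finset.univ
          (fun k => if k = i then p (xs k) * G (xs k) else p (xs k)) (Finset.mem_univ i),
        ← Finset.mul_prod_erase Finset.univ (fun k => p (xs k)) (Finset.mem_univ i)]
    simp only [if_pos rfl]
    rw [Finset.prod_congr rfl (fun k hk =>
      if_neg (Finset.ne_of_mem_erase hk) :
      ∀ k ∈ Finset.univ.erase i, (if k = i then p (xs k) * G (xs k) else p (xs k)) = p (xs k))]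
    simp only [if_true]; ring
  simp_rw [key]
  rw [sum_prod_pi (fun k x => if k = i then p x * G x else p x)]
  rw [← Finset.mul_prod_erase Finset.univ
        (fun k => ∑ x, if k = i then p x * G x else p x) (Finset.mem_univ i)]
  simp only [if_pos rfl]
  have h2 : ∀ k ∈ Finset.univ.erase i, (∑ x, if k = i then p x * G x else p x) = 1 := by
    intro k hk
    simp [Finset.ne_of_mem_erase hk, hp1]
  rw [Finset.prod_congr rfl h2]
  simp

lemma E_two (p : 𝒳 → ℝ) (hp1 : ∑ x, p x = 1) (i j : Fin n) (hij : i ≠ j) (G H : 𝒳 → ℝ) :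
    ∑ xs : Fin n → 𝒳, (∏ k, p (xs k)) * (G (xs i) * H (xs j)) =
      (∑ x, p x * G x) * (∑ x, p x * H x) := by
  have hji : j ∈ Finset.univ.erase i := Finset.mem_erase.2 ⟨hij.symm, Finset.mem_univ j⟩
  have key : ∀ xs : Fin n → 𝒳,
      (∏ k, p (xs k)) * (G (xs i) * H (xs j)) =
        ∏ k, (if k = i then p (xs k) * G (xs k)
              else if k = j then p (xs k) * H (xs k) else p (xs k)) := by
    intro xs
    rw [← Finset.mul_prod_erase Finset.univ
          (fun k => if k = i then p (xs k) * G (xs k)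
              else if k = j then p (xs k) * H (xs k) else p (xs k)) (Finset.mem_univ i),
        ← Finset.mul_prod_erase _
          (fun k => if k = i then p (xs k) * G (xs k)
              else if k = j then p (xs k) * H (xs k) else p (xs k)) hji,
        ← Finset.mul_prod_erase Finset.univ (fun k => p (xs k)) (Finset.mem_univ i),
        ← Finset.mul_prod_erase _ (fun k => p (xs k)) hji]
    simp only [if_pos rfl, if_neg (Ne.symm hij)]
    rw [Finset.prod_congr rfl (fun k hk => by
      rw [if_neg (Finset.ne_of_mem_erase (Finset.mem_of_mem_erase hk)),
          if_neg (Finset.ne_of_mem_erase hk)] :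
      ∀ k ∈ (Finset.univ.erase i).erase j,
        (if k = i then p (xs k) * G (xs k)
         else if k = j then p (xs k) * H (xs k) else p (xs k)) = p (xs k))]
    simp only [if_true]; ring
  simp_rw [key]
  rw [sum_prod_pi (fun k x => if k = i then p x * G x else if k = j then p x * H x else p x)]
  rw [← Finset.mul_prod_erase Finset.univ
        (fun k => ∑ x, if k = i then p x * G x else if k = j then p x * H x else p x)
        (Finset.mem_univ i),
      ← Finset.mul_prod_erase _
        (fun k => ∑ x, if k = i then p x * G x else if k = j then p x * H x else p x) hji]
  simp only [if_pos rfl, if_neg (Ne.symm hij)]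
  have h2 : ∀ k ∈ (Finset.univ.erase i).erase j,
      (∑ x, if k = i then p x * G x else if k = j then p x * H x else p x) = 1 := by
    intro k hk
    simp [Finset.ne_of_mem_erase (Finset.mem_of_mem_erase hk),
          Finset.ne_of_mem_erase hk, hp1]
  rw [Finset.prod_congr rfl h2]
  simp [mul_assoc]

end aux

section aux3
variable {𝒳 : Type*} [Fintype 𝒳] {n : ℕ}
lemma E_sum_sq (p : 𝒳 → ℝ) (hp1 : ∑ x, p x = 1) (h : 𝒳 → ℝ)
    (hmean : ∑ x, p x * h x = 0) :
    ∑ xs : Fin n → 𝒳, (∏ k, p (xs k)) * (∑ i, h (xs i)) ^ 2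
      = n * ∑ x, p x * h x ^ 2 := by
  have expand : ∀ xs : Fin n → 𝒳, (∏ k, p (xs k)) * (∑ i, h (xs i)) ^ 2
      = ∑ i, ∑ j, (∏ k, p (xs k)) * (h (xs i) * h (xs j)) := by
    intro xs
    rw [sq, Finset.sum_mul_sum, Finset.mul_sum]
    exact Finset.sum_congr rfl fun i _ => by rw [Finset.mul_sum]
  simp_rw [expand]
  rw [Finset.sum_comm]
  rw [Finset.sum_congr rfl fun i _ => Finset.sum_comm]
  have inner : ∀ i j : Fin n, (∑ xs : Fin n → 𝒳, (∏ k, p (xs k)) * (h (xs i) * h (xs j)))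
      = if i = j then ∑ x, p x * h x ^ 2 else 0 := by
    intro i j
    by_cases hij : i = j
    · subst hij
      rw [if_pos rfl]
      have := E_one p hp1 i (fun x => h x * h x)
      simpa [sq] using this
    · rw [if_neg hij, E_two p hp1 i j hij h h, hmean, zero_mul]
  rw [Finset.sum_congr rfl fun i _ => Finset.sum_congr rfl fun j _ => inner i j]
  simp [Finset.sum_ite_eq]

end aux3

/-- **Weak typicality (AEP)**: for i.i.d. draws from `p`, the probability of the
`δ`-typical set tends to one; formally, for every `ε, δ > 0` there is `N` such that
for all `n ≥ N` the i.i.d. probability of the `δ`-typical set is at least `1 − ε`. -/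
theorem weak_typicality_AEP {𝒳 : Type*} [Fintype 𝒳]
    (p : 𝒳 → ℝ) (hp : ∀ x, 0 ≤ p x) (hp1 : ∑ x, p x = 1)
    (ε δ : ℝ) (hε : 0 < ε) (hδ : 0 < δ) :
    ∃ N : ℕ, ∀ n ≥ N,
      1 - ε ≤ ∑ xs : Fin n → 𝒳,
        (if IsTypical p δ xs then ∏ i, p (xs i) else 0) := by
  set μ := shannonEntropy p with hμ
  set h : 𝒳 → ℝ := fun x => -Real.logb 2 (p x) - μ with hh
  have hmean : ∑ x, p x * h x = 0 := by
    have : ∑ x, p x * h x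
        = (-∑ x, p x * Real.logb 2 (p x)) - (∑ x, p x) * μ := by
      rw [← Finset.sum_neg_distrib, Finset.sum_mul, ← Finset.sum_sub_distrib]
      exact Finset.sum_congr rfl fun x _ => by simp [hh]; ring
    rw [this, hp1, one_mul, hμ, shannonEntropy]
    ring
  set V : ℝ := ∑ x, p x * h x ^ 2 with hV
  have hV0 : 0 ≤ V := Finset.sum_nonneg fun x _ => mul_nonneg (hp x) (sq_nonneg _)
  obtain ⟨N₀, hN₀⟩ := exists_nat_ge (V / (ε * δ ^ 2))
  refine ⟨max N₀ 1, fun n hn => ?_⟩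
  have hn1 : 1 ≤ n := le_trans (le_max_right _ _) hn
  have hnR : (0 : ℝ) < n := by exact_mod_cast hn1
  have hnN₀ : (N₀ : ℝ) ≤ n := by exact_mod_cast le_trans (le_max_left _ _) hn
  -- Chebyshev bound on the atypical mass
  have Wnn : ∀ xs : Fin n → 𝒳, 0 ≤ ∏ k, p (xs k) :=
    fun xs => Finset.prod_nonneg fun k _ => hp _
  have pointwise : ∀ xs : Fin n → 𝒳,
      (if IsTypical p δ xs then 0 else ∏ k, p (xs k))
        ≤ ((∏ k, p (xs k)) * (∑ i, h (xs i)) ^ 2) * (1 / (n ^ 2 * δ ^ 2)) := by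
    intro xs
    have rhs_nn : 0 ≤ ((∏ k, p (xs k)) * (∑ i, h (xs i)) ^ 2) * (1 / (n ^ 2 * δ ^ 2)) :=
      mul_nonneg (mul_nonneg (Wnn xs) (sq_nonneg _)) (by positivity)
    by_cases hT : IsTypical p δ xs
    · simpa [hT] using rhs_nn
    · rw [if_neg hT]
      by_cases hW : ∏ k, p (xs k) = 0
      · simpa [hW] using rhs_nn
      · have hpos : ∀ i, 0 < p (xs i) := by
          intro i
          rcases lt_or_eq_of_le (hp (xs i)) with h' | h'
          · exact h'
          · exact absurd (Finset.prod_eq_zero (Finset.mem_univ i) h'.symm) hW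
        have hdev : δ < |(-(1 / (n : ℝ)) * ∑ i, Real.logb 2 (p (xs i))) - μ| := by
          by_contra hc
          exact hT ⟨hpos, le_of_not_gt hc⟩
        have hsum : (∑ i, h (xs i)) = (-∑ i, Real.logb 2 (p (xs i))) - n * μ := by
          simp [hh, Finset.sum_sub_distrib, Finset.sum_neg_distrib, Finset.sum_const,
            Finset.card_univ, nsmul_eq_mul]
        have hdev2 : δ < |(1 / (n : ℝ)) * ∑ i, h (xs i)| := by
          have : (1 / (n : ℝ)) * ∑ i, h (xs i)
              = (-(1 / (n : ℝ)) * ∑ i, Real.logb 2 (p (xs i))) - μ := by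
            rw [hsum]
            field_simp
          rw [this]; exact hdev
        have hsq : δ ^ 2 < ((1 / (n : ℝ)) * ∑ i, h (xs i)) ^ 2 := by
          calc δ ^ 2 < |(1 / (n : ℝ)) * ∑ i, h (xs i)| ^ 2 := by
                exact pow_lt_pow_left₀ hdev2 (le_of_lt hδ) (by norm_num)
            _ = ((1 / (n : ℝ)) * ∑ i, h (xs i)) ^ 2 := sq_abs _
        have key : (1 : ℝ) ≤ ((∑ i, h (xs i)) ^ 2) * (1 / (n ^ 2 * δ ^ 2)) := by
          rw [show ((∑ i, h (xs i)) ^ 2) * (1 / ((n:ℝ) ^ 2 * δ ^ 2))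
              = ((1 / (n : ℝ)) * ∑ i, h (xs i)) ^ 2 / δ ^ 2 by field_simp]
          rw [le_div_iff₀ (by positivity)]
          linarith
        calc ∏ k, p (xs k) = (∏ k, p (xs k)) * 1 := (mul_one _).symm
          _ ≤ (∏ k, p (xs k)) * (((∑ i, h (xs i)) ^ 2) * (1 / (n ^ 2 * δ ^ 2))) :=
              mul_le_mul_of_nonneg_left key (Wnn xs)
          _ = ((∏ k, p (xs k)) * (∑ i, h (xs i)) ^ 2) * (1 / (n ^ 2 * δ ^ 2)) := by ring
  have atyp_bound : (∑ xs : Fin n → 𝒳, if IsTypical p δ xs then 0 else ∏ k, p (xs k)) ≤ ε := by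
    calc (∑ xs : Fin n → 𝒳, if IsTypical p δ xs then 0 else ∏ k, p (xs k))
        ≤ ∑ xs : Fin n → 𝒳, ((∏ k, p (xs k)) * (∑ i, h (xs i)) ^ 2) * (1 / (n ^ 2 * δ ^ 2)) :=
          Finset.sum_le_sum fun xs _ => pointwise xs
      _ = (∑ xs : Fin n → 𝒳, (∏ k, p (xs k)) * (∑ i, h (xs i)) ^ 2) * (1 / (n ^ 2 * δ ^ 2)) :=
          (Finset.sum_mul _ _ _).symm
      _ = (n * V) * (1 / (n ^ 2 * δ ^ 2)) := by rw [E_sum_sq p hp1 h hmean]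
      _ = V / (n * δ ^ 2) := by field_simp
      _ ≤ ε := by
          rw [div_le_iff₀ (by positivity)]
          have h1 : V / (ε * δ ^ 2) ≤ (n : ℝ) := le_trans hN₀ hnN₀
          have h2 : V ≤ n * (ε * δ ^ 2) := by
            rw [div_le_iff₀ (by positivity)] at h1
            linarith
          linarith [h2]
  have split : (∑ xs : Fin n → 𝒳, if IsTypical p δ xs then ∏ i, p (xs i) else 0)
      = 1 - ∑ xs : Fin n → 𝒳, (if IsTypical p δ xs then 0 else ∏ k, p (xs k)) := by
    rw [← sum_W p hp1 (n := n), ← Finset.sum_sub_distrib]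
    exact Finset.sum_congr rfl fun xs _ => by by_cases hT : IsTypical p δ xs <;> simp [hT]
  rw [split]
  linarith [atyp_bound]
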